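/- For the completely solvable Lie algebra with brackets [X1,X3]=-kX1, [X2,X3]=kX2 (k≠0), the first Chevalley–Eilenberg cohomology H^1 is 2-dimensional (spanned by x3 and x4) and H^2 is 2-dimensional (represented by x1∧x2 and x3∧x4). -/

import Mathlib

set_option maxSynthPendingDepth 3

/-- The bracket [X1,X3] = -k X1, [X2,X3] = k X2 as a bilinear map. -/
noncomputable def solvBr (k : ℝ) :
    (Fin 4 → ℝ) →ₗ[ℝ] (Fin 4 → ℝ) →ₗ[ℝ] (Fin 4 → ℝ) :=
  LinearMap.mk₂ ℝ
    (fun x y => ![-k * (x 0 * y 2 - x 2 * y 0), k * (x 1 * y 2 - x 2 * y 1), 0, 0])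
    (by intro m₁ m₂ n; funext i; fin_cases i <;> simp <;> ring)
    (by intro c m n; funext i; fin_cases i <;> simp <;> ring)
    (by intro m n₁ n₂; funext i; fin_cases i <;> simp <;> ring)
    (by intro c m n; funext i; fin_cases i <;> simp <;> ring)

/-- Alternating bilinear forms (2-cochains). -/
noncomputable def Alt4 : Submodule ℝ ((Fin 4 → ℝ) →ₗ[ℝ] (Fin 4 → ℝ) →ₗ[ℝ] ℝ) :=
  ⨅ x : Fin 4 → ℝ, LinearMap.ker ((LinearMap.applyₗ x).comp (LinearMap.applyₗ x))

/-- Closed 2-cochains. -/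
noncomputable def Z2 (k : ℝ) :
    Submodule ℝ ((Fin 4 → ℝ) →ₗ[ℝ] (Fin 4 → ℝ) →ₗ[ℝ] ℝ) :=
  Alt4 ⊓ ⨅ x : Fin 4 → ℝ, ⨅ y : Fin 4 → ℝ, ⨅ z : Fin 4 → ℝ,
    LinearMap.ker
      ((-(LinearMap.applyₗ z).comp (LinearMap.applyₗ (solvBr k x y))
        + (LinearMap.applyₗ y).comp (LinearMap.applyₗ (solvBr k x z))
        - (LinearMap.applyₗ x).comp (LinearMap.applyₗ (solvBr k y z)) :
        ((Fin 4 → ℝ) →ₗ[ℝ] (Fin 4 → ℝ) →ₗ[ℝ] ℝ) →ₗ[ℝ] ℝ))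

/-- Exact 2-cochains. -/
noncomputable def B2 (k : ℝ) :
    Submodule ℝ ((Fin 4 → ℝ) →ₗ[ℝ] (Fin 4 → ℝ) →ₗ[ℝ] ℝ) :=
  Submodule.span ℝ
    {ω | ∃ f : (Fin 4 → ℝ) →ₗ[ℝ] ℝ, ω = -((solvBr k).compr₂ f)}

/-- The 2-form x1∧x2. -/
noncomputable def x12 : (Fin 4 → ℝ) →ₗ[ℝ] (Fin 4 → ℝ) →ₗ[ℝ] ℝ :=
  LinearMap.mk₂ ℝ (fun x y => x 0 * y 1 - x 1 * y 0)
    (by intros; simp; ring) (by intros; simp; ring)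
    (by intros; simp; ring) (by intros; simp; ring)

/-- The 2-form x3∧x4. -/
noncomputable def x34 : (Fin 4 → ℝ) →ₗ[ℝ] (Fin 4 → ℝ) →ₗ[ℝ] ℝ :=
  LinearMap.mk₂ ℝ (fun x y => x 2 * y 3 - x 3 * y 2)
    (by intros; simp; ring) (by intros; simp; ring)
    (by intros; simp; ring) (by intros; simp; ring)

noncomputable abbrev E (i : Fin 4) : Fin 4 → ℝ := Pi.single i 1

lemma bilin_ext {B C : (Fin 4 → ℝ) →ₗ[ℝ] (Fin 4 → ℝ) →ₗ[ℝ] ℝ}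
    (h : ∀ i j, B (E i) (E j) = C (E i) (E j)) : B = C := by
  apply Module.Basis.ext (Pi.basisFun ℝ (Fin 4))
  intro i
  apply Module.Basis.ext (Pi.basisFun ℝ (Fin 4))
  intro j
  simpa [Pi.basisFun_apply] using h i j

lemma vec_expand (x : Fin 4 → ℝ) : x = x 0 • E 0 + x 1 • E 1 + x 2 • E 2 + x 3 • E 3 := by
  funext i; fin_cases i <;> simp [Pi.single_apply]

lemma solvBr_E (k : ℝ) (x y : Fin 4 → ℝ) :
    solvBr k x y = (-k * (x 0 * y 2 - x 2 * y 0)) • E 0 + (k * (x 1 * y 2 - x 2 * y 1)) • E 1 := by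
  funext i; fin_cases i <;> simp [solvBr, Pi.single_apply]

example (k : ℝ) (f : (Fin 4 → ℝ) →ₗ[ℝ] ℝ) (x y : Fin 4 → ℝ) :
    f (solvBr k x y) = (-k * (x 0 * y 2 - x 2 * y 0)) * f (E 0) + (k * (x 1 * y 2 - x 2 * y 1)) * f (E 1) := by
  rw [solvBr_E]; simp

lemma fE (k : ℝ) (f : (Fin 4 → ℝ) →ₗ[ℝ] ℝ) (x y : Fin 4 → ℝ) :
    f (solvBr k x y) = (-k * (x 0 * y 2 - x 2 * y 0)) * f (E 0) + (k * (x 1 * y 2 - x 2 * y 1)) * f (E 1) := by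
  rw [solvBr_E]; simp

lemma part1a (k : ℝ) (hk : k ≠ 0) :
    ({f : (Fin 4 → ℝ) →ₗ[ℝ] ℝ | ∀ x y, f (solvBr k x y) = 0} =
      ↑(Submodule.span ℝ
          {(LinearMap.proj 2 : (Fin 4 → ℝ) →ₗ[ℝ] ℝ), LinearMap.proj 3})) := by
  ext f
  simp only [Set.mem_setOf_eq, SetLike.mem_coe, Submodule.mem_span_pair]
  constructor
  · intro h
    have h0 : f (E 0) = 0 := by
      have := h (E 0) (E 2)
      rw [fE] at this
      simp [Pi.single_apply] at this
      rcases this with h | h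
      · exact absurd h hk
      · exact h
    have h1 : f (E 1) = 0 := by
      have := h (E 1) (E 2)
      rw [fE] at this
      simp [Pi.single_apply] at this
      rcases this with h | h
      · exact absurd h hk
      · exact h
    refine ⟨f (E 2), f (E 3), ?_⟩
    apply Module.Basis.ext (Pi.basisFun ℝ (Fin 4))
    intro i
    fin_cases i <;>
      simp [Pi.basisFun_apply, Pi.single_apply, h0, h1]
  · rintro ⟨a, b, rfl⟩ x y
    simp [fE k, solvBr, Pi.single_apply]

lemma pair_range {α : Type*} (a b : α) : Set.range ![a,b] = {a,b} := by
  simp [Matrix.range_cons, Matrix.range_empty, Set.pair_comm]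

lemma part1b :
    Module.finrank ℝ
       (Submodule.span ℝ
         {(LinearMap.proj 2 : (Fin 4 → ℝ) →ₗ[ℝ] ℝ), LinearMap.proj 3}) = 2 := by
  rw [← pair_range]
  rw [finrank_span_eq_card (R := ℝ)]
  · simp
  · rw [LinearIndependent.pair_iff]
    intro s t hst
    have h2 := LinearMap.congr_fun hst (E 2)
    have h3 := LinearMap.congr_fun hst (E 3)
    simp [Pi.single_apply] at h2 h3
    exact ⟨h2, h3⟩

noncomputable def x13 : (Fin 4 → ℝ) →ₗ[ℝ] (Fin 4 → ℝ) →ₗ[ℝ] ℝ :=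
  LinearMap.mk₂ ℝ (fun x y => x 0 * y 2 - x 2 * y 0)
    (by intros; simp; ring) (by intros; simp; ring)
    (by intros; simp; ring) (by intros; simp; ring)

noncomputable def x23 : (Fin 4 → ℝ) →ₗ[ℝ] (Fin 4 → ℝ) →ₗ[ℝ] ℝ :=
  LinearMap.mk₂ ℝ (fun x y => x 1 * y 2 - x 2 * y 1)
    (by intros; simp; ring) (by intros; simp; ring)
    (by intros; simp; ring) (by intros; simp; ring)

lemma mem_Z2 (k : ℝ) (ω : (Fin 4 → ℝ) →ₗ[ℝ] (Fin 4 → ℝ) →ₗ[ℝ] ℝ) :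
    ω ∈ Z2 k ↔ (∀ x, ω x x = 0) ∧
      ∀ x y z, -(ω (solvBr k x y) z) + ω (solvBr k x z) y - ω (solvBr k y z) x = 0 := by
  simp [Z2, Alt4, Submodule.mem_inf, Submodule.mem_iInf, LinearMap.mem_ker,
    LinearMap.applyₗ_apply_apply, sub_eq_zero]

example (k : ℝ) : x12 ∈ Z2 k := by
  rw [mem_Z2]
  constructor
  · intro x; simp [x12]; ring
  · intro x y z; simp [x12, solvBr]; ring

lemma x12_mem (k : ℝ) : x12 ∈ Z2 k := by
  rw [mem_Z2]
  exact ⟨fun x => by simp [x12]; ring,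
    fun x y z => by simp [x12, solvBr]; ring⟩

lemma x13_mem (k : ℝ) : x13 ∈ Z2 k := by
  rw [mem_Z2]
  exact ⟨fun x => by simp [x13]; ring,
    fun x y z => by simp [x13, solvBr]; ring⟩

lemma x23_mem (k : ℝ) : x23 ∈ Z2 k := by
  rw [mem_Z2]
  exact ⟨fun x => by simp [x23]; ring,
    fun x y z => by simp [x23, solvBr]; ring⟩

lemma x34_mem (k : ℝ) : x34 ∈ Z2 k := by
  rw [mem_Z2]
  exact ⟨fun x => by simp [x34]; ring,
    fun x y z => by simp [x34, solvBr]⟩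

noncomputable def zbasis : Fin 4 → ((Fin 4 → ℝ) →ₗ[ℝ] (Fin 4 → ℝ) →ₗ[ℝ] ℝ) := ![x12, x13, x23, x34]

lemma Z2_eq_span (k : ℝ) (hk : k ≠ 0) : Z2 k = Submodule.span ℝ (Set.range zbasis) := by
  apply le_antisymm
  · intro ω hω
    rw [mem_Z2] at hω
    obtain ⟨halt, hcoc⟩ := hω
    -- antisymmetry at basis
    have asym : ∀ i j, ω (E i) (E j) = - ω (E j) (E i) := by
      intro i j
      have := halt (E i + E j)
      simp [map_add, halt] at this
      linarith [this]
    have diag : ∀ i, ω (E i) (E i) = 0 := fun i => halt (E i)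
    -- ω03 = 0 from cocycle (E0, E2, E3)
    have h03 : ω (E 0) (E 3) = 0 := by
      have := hcoc (E 0) (E 2) (E 3)
      rw [solvBr_E, solvBr_E, solvBr_E] at this
      simp [Pi.single_apply] at this
      rcases this with h | h
      · exact absurd h hk
      · exact h
    have h13 : ω (E 1) (E 3) = 0 := by
      have := hcoc (E 1) (E 2) (E 3)
      rw [solvBr_E, solvBr_E, solvBr_E] at this
      simp [Pi.single_apply] at this
      rcases this with h | h
      · exact absurd h hk
      · exact h
    have hrep : ω = ω (E 0) (E 1) • x12 + ω (E 0) (E 2) • x13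
        + ω (E 1) (E 2) • x23 + ω (E 2) (E 3) • x34 := by
      apply bilin_ext
      intro i j
      fin_cases i <;> fin_cases j <;>
        simp [x12, x13, x23, x34, Pi.single_apply, diag, h03, h13] <;>
        try (first | exact asym _ _ | (rw [asym]; simp [h03, h13]))
    rw [hrep]
    have m0 : x12 ∈ Submodule.span ℝ (Set.range zbasis) := Submodule.subset_span ⟨0, rfl⟩
    have m1 : x13 ∈ Submodule.span ℝ (Set.range zbasis) := Submodule.subset_span ⟨1, rfl⟩
    have m2 : x23 ∈ Submodule.span ℝ (Set.range zbasis) := Submodule.subset_span ⟨2, rfl⟩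
    have m3 : x34 ∈ Submodule.span ℝ (Set.range zbasis) := Submodule.subset_span ⟨3, rfl⟩
    exact Submodule.add_mem _ (Submodule.add_mem _ (Submodule.add_mem _
      (Submodule.smul_mem _ _ m0) (Submodule.smul_mem _ _ m1)) (Submodule.smul_mem _ _ m2))
      (Submodule.smul_mem _ _ m3)
  · rw [Submodule.span_le]
    rintro _ ⟨i, rfl⟩
    fin_cases i
    · exact x12_mem k
    · exact x13_mem k
    · exact x23_mem k
    · exact x34_mem k

lemma zbasis_indep : LinearIndependent ℝ zbasis := by
  rw [Fintype.linearIndependent_iff]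
  intro g hg
  have h01 := LinearMap.congr_fun (LinearMap.congr_fun hg (E 0)) (E 1)
  have h02 := LinearMap.congr_fun (LinearMap.congr_fun hg (E 0)) (E 2)
  have h12 := LinearMap.congr_fun (LinearMap.congr_fun hg (E 1)) (E 2)
  have h23 := LinearMap.congr_fun (LinearMap.congr_fun hg (E 2)) (E 3)
  simp [zbasis, Fin.sum_univ_four, x12, x13, x23, x34, Pi.single_apply] at h01 h02 h12 h23
  intro i; fin_cases i <;> assumption

lemma finrank_Z2 (k : ℝ) (hk : k ≠ 0) : Module.finrank ℝ (Z2 k) = 4 := by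
  rw [Z2_eq_span k hk, finrank_span_eq_card zbasis_indep]
  simp

noncomputable def dOp (k : ℝ) :
    ((Fin 4 → ℝ) →ₗ[ℝ] ℝ) →ₗ[ℝ] ((Fin 4 → ℝ) →ₗ[ℝ] (Fin 4 → ℝ) →ₗ[ℝ] ℝ) where
  toFun f := -((solvBr k).compr₂ f)
  map_add' f g := by
    apply bilin_ext; intro i j; simp [LinearMap.compr₂_apply]; ring
  map_smul' c f := by
    apply bilin_ext; intro i j; simp [LinearMap.compr₂_apply]

lemma B2_eq_range (k : ℝ) : B2 k = LinearMap.range (dOp k) := by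
  rw [B2]
  have : {ω | ∃ f : (Fin 4 → ℝ) →ₗ[ℝ] ℝ, ω = -((solvBr k).compr₂ f)}
      = ↑(LinearMap.range (dOp k)) := by
    ext ω
    simp [dOp, eq_comm]
  rw [this, Submodule.span_eq]

lemma mem_B2 (k : ℝ) (ω : (Fin 4 → ℝ) →ₗ[ℝ] (Fin 4 → ℝ) →ₗ[ℝ] ℝ) :
    ω ∈ B2 k ↔ ∃ f : (Fin 4 → ℝ) →ₗ[ℝ] ℝ, ω = -((solvBr k).compr₂ f) := by
  rw [B2_eq_range]
  simp [dOp, LinearMap.mem_range, eq_comm]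

noncomputable def bbasis : Fin 2 → ((Fin 4 → ℝ) →ₗ[ℝ] (Fin 4 → ℝ) →ₗ[ℝ] ℝ) := ![x13, x23]

set_option maxHeartbeats 1000000 in
lemma B2_eq_span (k : ℝ) (hk : k ≠ 0) : B2 k = Submodule.span ℝ (Set.range bbasis) := by
  apply le_antisymm
  · intro ω hω
    rw [mem_B2] at hω
    obtain ⟨f, rfl⟩ := hω
    have m0 : x13 ∈ Submodule.span ℝ (Set.range bbasis) := Submodule.subset_span ⟨0, rfl⟩
    have m1 : x23 ∈ Submodule.span ℝ (Set.range bbasis) := Submodule.subset_span ⟨1, rfl⟩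
    have hrep : -((solvBr k).compr₂ f) = (k * f (E 0)) • x13 + (-(k * f (E 1))) • x23 := by
      apply bilin_ext
      intro i j
      rw [LinearMap.neg_apply, LinearMap.neg_apply, LinearMap.compr₂_apply, fE]
      fin_cases i <;> fin_cases j <;> simp [x13, x23, Pi.single_apply] <;> ring
    rw [hrep]
    exact Submodule.add_mem _ (Submodule.smul_mem _ _ m0) (Submodule.smul_mem _ _ m1)
  · rw [Submodule.span_le]
    rintro _ ⟨i, rfl⟩
    fin_cases i <;> simp only [SetLike.mem_coe]
    · show x13 ∈ B2 k
      rw [mem_B2]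
      refine ⟨(1/k) • LinearMap.proj 0, ?_⟩
      apply bilin_ext
      intro i j
      rw [LinearMap.neg_apply, LinearMap.neg_apply, LinearMap.compr₂_apply, fE]
      fin_cases i <;> fin_cases j <;>
        simp [x13, Pi.single_apply] <;> field_simp
    · show x23 ∈ B2 k
      rw [mem_B2]
      refine ⟨(-(1/k)) • LinearMap.proj 1, ?_⟩
      apply bilin_ext
      intro i j
      rw [LinearMap.neg_apply, LinearMap.neg_apply, LinearMap.compr₂_apply, fE]
      fin_cases i <;> fin_cases j <;>
        simp [x23, Pi.single_apply] <;> field_simp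

lemma bbasis_indep : LinearIndependent ℝ bbasis := by
  rw [Fintype.linearIndependent_iff]
  intro g hg
  have h02 := LinearMap.congr_fun (LinearMap.congr_fun hg (E 0)) (E 2)
  have h12 := LinearMap.congr_fun (LinearMap.congr_fun hg (E 1)) (E 2)
  simp [bbasis, Fin.sum_univ_two, x13, x23, Pi.single_apply] at h02 h12
  intro i; fin_cases i <;> assumption

lemma B2_le_Z2 (k : ℝ) (hk : k ≠ 0) : B2 k ≤ Z2 k := by
  rw [B2_eq_span k hk, Submodule.span_le]
  rintro _ ⟨i, rfl⟩
  fin_cases i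
  · exact x13_mem k
  · exact x23_mem k

lemma finrank_B2comap (k : ℝ) (hk : k ≠ 0) :
    Module.finrank ℝ ((B2 k).comap (Z2 k).subtype) = 2 := by
  rw [(Submodule.comapSubtypeEquivOfLe (B2_le_Z2 k hk)).finrank_eq]
  rw [B2_eq_span k hk, finrank_span_eq_card bbasis_indep]
  simp

lemma finrank_quot (k : ℝ) (hk : k ≠ 0) :
    Module.finrank ℝ (Z2 k ⧸ (B2 k).comap (Z2 k).subtype) = 2 := by
  have h := Submodule.finrank_quotient_add_finrank ((B2 k).comap (Z2 k).subtype)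
  rw [finrank_B2comap k hk, finrank_Z2 k hk] at h
  omega


/-- H¹ is 2-dimensional, spanned by x3 and x4, and H² is 2-dimensional,
represented by x1∧x2 and x3∧x4. -/
theorem solv4_H1_H2 (k : ℝ) (hk : k ≠ 0) :
    ({f : (Fin 4 → ℝ) →ₗ[ℝ] ℝ | ∀ x y, f (solvBr k x y) = 0} =
      ↑(Submodule.span ℝ
          {(LinearMap.proj 2 : (Fin 4 → ℝ) →ₗ[ℝ] ℝ), LinearMap.proj 3}) ∧
     Module.finrank ℝ
       (Submodule.span ℝ
         {(LinearMap.proj 2 : (Fin 4 → ℝ) →ₗ[ℝ] ℝ), LinearMap.proj 3}) = 2) ∧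
    (∃ (h12 : x12 ∈ Z2 k) (h34 : x34 ∈ Z2 k),
      Module.finrank ℝ (Z2 k ⧸ (B2 k).comap (Z2 k).subtype) = 2 ∧
      Submodule.span ℝ
        {Submodule.Quotient.mk (p := (B2 k).comap (Z2 k).subtype) ⟨x12, h12⟩,
         Submodule.Quotient.mk (p := (B2 k).comap (Z2 k).subtype) ⟨x34, h34⟩}
        = ⊤) := by
  refine ⟨⟨part1a k hk, part1b⟩, x12_mem k, x34_mem k, finrank_quot k hk, ?_⟩
  set p := (B2 k).comap (Z2 k).subtype with hp
  set q1 : Z2 k ⧸ p := Submodule.Quotient.mk ⟨x12, x12_mem k⟩ with hq1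
  set q2 : Z2 k ⧸ p := Submodule.Quotient.mk ⟨x34, x34_mem k⟩ with hq2
  have hindep : LinearIndependent ℝ ![q1, q2] := by
    rw [LinearIndependent.pair_iff]
    intro s t hst
    have hmem : (s • x12 + t • x34) ∈ B2 k := by
      have : s • q1 + t • q2 =
          Submodule.Quotient.mk (p := p) (s • ⟨x12, x12_mem k⟩ + t • ⟨x34, x34_mem k⟩) := by
        rw [hq1, hq2, ← Submodule.Quotient.mk_smul, ← Submodule.Quotient.mk_smul,
          ← Submodule.Quotient.mk_add]
      rw [this, Submodule.Quotient.mk_eq_zero] at hst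
      exact hst
    rw [mem_B2] at hmem
    obtain ⟨f, hf⟩ := hmem
    have e1 := LinearMap.congr_fun (LinearMap.congr_fun hf (E 0)) (E 1)
    have e2 := LinearMap.congr_fun (LinearMap.congr_fun hf (E 2)) (E 3)
    rw [LinearMap.neg_apply, LinearMap.neg_apply, LinearMap.compr₂_apply, fE] at e1 e2
    simp [x12, x34, Pi.single_apply] at e1 e2
    exact ⟨e1, e2⟩
  have hfin : Module.finrank ℝ (Submodule.span ℝ {q1, q2}) = 2 := by
    rw [← pair_range q1 q2, finrank_span_eq_card hindep]
    simp
  have : FiniteDimensional ℝ (Z2 k ⧸ p) := by infer_instance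
  apply Submodule.eq_top_of_finrank_eq
  rw [hfin, finrank_quot k hk]
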